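/- Let S ⊆ [m] × [n] be a finite set such that the bipartite graph G_S is doubly chordal bipartite, and let C = A_1 × B_0 ∈ Int(S). Define recursively, for k ≥ 2, A_k = { i ∈ [m] : i ∉ A_{k−1} and there exists j ∈ B_{k−1} with (i,j) ∈ S }, and, for k ≥ 1, B_k = { j ∈ [n] : j ∉ B_{k−1} and there exists i ∈ A_k with (i,j) ∈ S }. Then A_k and B_k are empty for all sufficiently large k, and the indicator vector of C satisfies 𝟙_C = Σ_{k≥1} ( Σ_{i ∈ A_k} a_i − Σ_{j ∈ B_k} b_j ) in ℝ^S, where a_i and b_j are the rows of the matrix A_S. -/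

import Mathlib

/-- A clique in `S ⊆ [m] × [n]` is a nonempty subset of `S` of the form `R × C`. -/
def IsCliqueIn {m n : ℕ} (S D : Finset (Fin m × Fin n)) : Prop :=
  D.Nonempty ∧ D ⊆ S ∧ ∃ (R : Finset (Fin m)) (C : Finset (Fin n)), D = R ×ˢ C

/-- A maximal clique of `S`, i.e. an element of `Max(S)`. -/
def IsMaxCliqueIn {m n : ℕ} (S D : Finset (Fin m × Fin n)) : Prop :=
  IsCliqueIn S D ∧ ∀ E, IsCliqueIn S E → D ⊆ E → D = E

/-- A nonempty intersection of two distinct maximal cliques of `S`. -/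
def IsPairIntersection {m n : ℕ} (S C : Finset (Fin m × Fin n)) : Prop :=
  ∃ D E, IsMaxCliqueIn S D ∧ IsMaxCliqueIn S E ∧ D ≠ E ∧ C = D ∩ E ∧ C.Nonempty

/-- An element of `Int(S)`: a containment-maximal pairwise intersection of maximal cliques. -/
def IsMaxIntersection {m n : ℕ} (S C : Finset (Fin m × Fin n)) : Prop :=
  IsPairIntersection S C ∧ ∀ C', IsPairIntersection S C' → C ⊆ C' → C = C'

/-- The bipartite graph `G_S` on `[m] ⊔ [n]` with an edge `i ~ j` iff `(i,j) ∈ S`. -/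
def graphOf {m n : ℕ} (S : Finset (Fin m × Fin n)) : SimpleGraph (Fin m ⊕ Fin n) :=
  SimpleGraph.fromRel fun u v => ∃ p ∈ S, u = Sum.inl p.1 ∧ v = Sum.inr p.2

/-- The cycle graph on `ℓ` vertices. -/
def cycleGraph (ℓ : ℕ) : SimpleGraph (ZMod ℓ) :=
  SimpleGraph.fromRel fun u v => v = u + 1

/-- The double square graph: two 4-cycles glued along a common edge. -/
def doubleSquare : SimpleGraph (Fin 3 ⊕ Fin 3) :=
  SimpleGraph.fromRel fun u v =>
    (u, v) ∈ ([(Sum.inl 0, Sum.inr 0), (Sum.inl 0, Sum.inr 1), (Sum.inl 1, Sum.inr 0),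
      (Sum.inl 1, Sum.inr 1), (Sum.inl 1, Sum.inr 2), (Sum.inl 2, Sum.inr 1),
      (Sum.inl 2, Sum.inr 2)] : List ((Fin 3 ⊕ Fin 3) × (Fin 3 ⊕ Fin 3)))

/-- `G` contains an induced copy of `H`. -/
def HasInducedCopy {V W : Type*} (H : SimpleGraph V) (G : SimpleGraph W) : Prop :=
  ∃ f : V → W, Function.Injective f ∧ ∀ u v, H.Adj u v ↔ G.Adj (f u) (f v)

/-- A graph is doubly chordal bipartite if it has no induced cycle of length at least 6 and
no induced double square. -/
def DoublyChordalBipartite {V : Type*} (G : SimpleGraph V) : Prop :=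
  (∀ ℓ : ℕ, 6 ≤ ℓ → ¬ HasInducedCopy (cycleGraph ℓ) G) ∧ ¬ HasInducedCopy doubleSquare G

/-!
The layers `A 1, A 2, …` are pairwise disjoint, and so are `B 0, B 1, …`. A first coincidence
can only be a column `j ∈ B 0 ∩ B l`; walking back from `j` through the recursion gives a closed
walk `j, A l, B (l-1), …, B 1, A 1, j`. For `l = 2` it yields, together with the two maximal
cliques meeting in `C`, either an induced double square or a pairwise intersection strictly
larger than `C`; for `l ≥ 3` it is an induced cycle of length `2l`. Disjointness makes the layers
die out, and for `(i, j) ∈ S` with `i ∈ A k` one has `j ∈ B (k-1)` or `j ∈ B k`, so the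
coefficient of `(i, j)` in the sum is `1` exactly when `i ∈ A 1` and `j ∈ B 0`.
-/

open Sum

variable {m n : ℕ}

lemma Finset.exists_eq_empty_of_pairwiseDisjoint {α : Type*} [Fintype α] {F : ℕ → Finset α}
    (hF : (Set.Ici 1).PairwiseDisjoint F) : ∃ K, 1 ≤ K ∧ F K = ∅ := by
  by_contra! hne
  have : Nonempty α := ⟨(hne 1 le_rfl).choose⟩
  choose! x hx using hne
  obtain ⟨k, hk, k', hk', hkk', hxk⟩ := Finset.exists_ne_map_eq_of_card_lt_of_maps_to
    (s := Finset.Icc 1 (Fintype.card α + 1)) (t := Finset.univ) (f := x) (by simp)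
    fun _ _ => Finset.mem_coe.2 (Finset.mem_univ _)
  rw [Finset.mem_Icc] at hk hk'
  exact Finset.disjoint_left.1 (hF hk.1 hk'.1 hkk') (hx k hk.1) (hxk ▸ hx k' hk'.1)

lemma Finset.sum_ite_mem_of_pairwiseDisjoint {ι α M : Type*} [DecidableEq α] [AddCommMonoid M]
    {I : Finset ι} {F : ι → Finset α} (hF : (I : Set ι).PairwiseDisjoint F) (x : α) (c : M) :
    ∑ k ∈ I, (if x ∈ F k then c else 0) = if ∃ k ∈ I, x ∈ F k then c else 0 := by
  split_ifs with h
  · obtain ⟨k₀, hk₀, hx⟩ := h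
    rw [Finset.sum_eq_single_of_mem k₀ hk₀ fun k hk hne =>
      if_neg fun hxk => Finset.disjoint_left.1 (hF hk hk₀ hne) hxk hx, if_pos hx]
  · exact Finset.sum_eq_zero fun k hk => if_neg fun hx => h ⟨k, hk, hx⟩

lemma ite_sub_ite_eq_ite {P Q R : Prop} [Decidable P] [Decidable Q] [Decidable R]
    (hP : P ↔ R ∨ Q) (hRQ : ¬ (R ∧ Q)) :
    ((if P then 1 else 0) - (if Q then 1 else 0) : ℝ) = if R then 1 else 0 := by
  by_cases hR : R <;> by_cases hQ : Q <;> simp_all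

lemma hasInducedCopy_of_adj_iff {V W : Type*} {H : SimpleGraph V} {G : SimpleGraph W}
    (hH : ∀ u v, (∀ w, H.Adj u w ↔ H.Adj v w) → u = v) (f : V → W)
    (hf : ∀ u v, H.Adj u v ↔ G.Adj (f u) (f v)) : HasInducedCopy H G :=
  ⟨f, fun u v huv => hH u v fun w => by rw [hf, hf, huv], hf⟩

@[simp]
lemma graphOf_adj_inl_inr {S : Finset (Fin m × Fin n)} {i : Fin m} {j : Fin n} :
    (graphOf S).Adj (inl i) (inr j) ↔ (i, j) ∈ S := by
  simp [graphOf]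

@[simp]
lemma graphOf_adj_inr_inl {S : Finset (Fin m × Fin n)} {i : Fin m} {j : Fin n} :
    (graphOf S).Adj (inr j) (inl i) ↔ (i, j) ∈ S := by
  rw [SimpleGraph.adj_comm, graphOf_adj_inl_inr]

@[simp]
lemma graphOf_not_adj_inl_inl {S : Finset (Fin m × Fin n)} {i i' : Fin m} :
    ¬ (graphOf S).Adj (inl i) (inl i') := by
  simp [graphOf]

@[simp]
lemma graphOf_not_adj_inr_inr {S : Finset (Fin m × Fin n)} {j j' : Fin n} :
    ¬ (graphOf S).Adj (inr j) (inr j') := by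
  simp [graphOf]

set_option synthInstance.maxSize 2048 in
lemma doubleSquare_eq_of_adj_iff :
    ∀ u v, (∀ w, doubleSquare.Adj u w ↔ doubleSquare.Adj v w) → u = v := by
  simp only [doubleSquare, SimpleGraph.fromRel_adj, List.mem_cons, List.not_mem_nil,
    Prod.mk.injEq, or_false]
  decide

lemma hasInducedCopy_doubleSquare_graphOf {S : Finset (Fin m × Fin n)}
    {a₁ a₂ a₃ : Fin m} {b₁ b₂ b₃ : Fin n}
    (e₁₁ : (a₁, b₁) ∈ S) (e₁₂ : (a₁, b₂) ∈ S) (e₂₁ : (a₂, b₁) ∈ S) (e₂₂ : (a₂, b₂) ∈ S)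
    (e₂₃ : (a₂, b₃) ∈ S) (e₃₂ : (a₃, b₂) ∈ S) (e₃₃ : (a₃, b₃) ∈ S)
    (n₁₃ : (a₁, b₃) ∉ S) (n₃₁ : (a₃, b₁) ∉ S) : HasInducedCopy doubleSquare (graphOf S) := by
  refine hasInducedCopy_of_adj_iff doubleSquare_eq_of_adj_iff
    (Sum.elim (fun k => inl (![a₁, a₂, a₃] k)) (fun k => inr (![b₁, b₂, b₃] k))) ?_
  rintro (u | u) (v | v) <;> fin_cases u <;> fin_cases v <;>
    simp [doubleSquare, *]

lemma cycleGraph_eq_of_adj_iff {N : ℕ} (hN : 5 ≤ N) :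
    ∀ u v, (∀ w, (cycleGraph N).Adj u w ↔ (cycleGraph N).Adj v w) → u = v := by
  have hne : ∀ k : ℕ, 0 < k → k < N → ((k : ℕ) : ZMod N) ≠ 0 := fun k hk hkN h =>
    absurd (Nat.le_of_dvd hk ((ZMod.natCast_eq_zero_iff k N).1 h)) (by omega)
  have h1 : (1 : ZMod N) ≠ 0 := by exact_mod_cast hne 1 (by omega) (by omega)
  have h4 : (4 : ZMod N) ≠ 0 := by exact_mod_cast hne 4 (by omega) (by omega)
  intro u v h
  by_contra huv
  have hsucc := (h (u + 1)).1 ⟨fun h' => h1 (by linear_combination -h'), Or.inl rfl⟩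
  have hpred := (h (u - 1)).1
    ⟨fun h' => h1 (by linear_combination h'), Or.inr (sub_add_cancel u 1).symm⟩
  simp only [cycleGraph, SimpleGraph.fromRel_adj, add_left_inj] at hsucc hpred
  obtain ⟨-, rfl | hv₁⟩ := hsucc
  · exact huv rfl
  obtain ⟨-, hv₂ | hv₂⟩ := hpred
  · exact h4 (by linear_combination -hv₁ - hv₂)
  · exact huv (by linear_combination -hv₂)

lemma cycleGraph_adj_iff_val {N : ℕ} [NeZero N] (hN : 3 ≤ N) {u v : ZMod N} :
    (cycleGraph N).Adj u v ↔ v.val = u.val + 1 ∨ u.val = v.val + 1 ∨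
      (u.val = 0 ∧ v.val + 1 = N) ∨ (v.val = 0 ∧ u.val + 1 = N) := by
  have : Fact (1 < N) := ⟨by omega⟩
  have hsucc : ∀ x y : ZMod N, y = x + 1 ↔ y.val = x.val + 1 ∨ (y.val = 0 ∧ x.val + 1 = N) := by
    intro x y
    rw [← (ZMod.val_injective N).eq_iff, ZMod.val_add, ZMod.val_one]
    have := x.val_lt
    have := y.val_lt
    rcases (Nat.lt_or_ge (x.val + 1) N) with hx | hx
    · rw [Nat.mod_eq_of_lt hx]; omega
    · rw [show x.val + 1 = N by omega, Nat.mod_self]; omega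
  simp only [cycleGraph, SimpleGraph.fromRel_adj, hsucc]
  constructor
  · rintro ⟨-, h | h⟩ <;> omega
  · intro h
    refine ⟨fun huv => ?_, by omega⟩
    subst huv
    omega

lemma hasInducedCopy_cycleGraph_graphOf {S : Finset (Fin m × Fin n)} {l : ℕ} (hl : 3 ≤ l)
    (r : ℕ → Fin m) (c : ℕ → Fin n)
    (hrc : ∀ a < l, ∀ b < l, (r a, c b) ∈ S ↔ b = a ∨ a = b + 1 ∨ (a = 0 ∧ b + 1 = l)) :
    HasInducedCopy (cycleGraph (2 * l)) (graphOf S) := by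
  have : NeZero (2 * l) := ⟨by omega⟩
  refine hasInducedCopy_of_adj_iff (cycleGraph_eq_of_adj_iff (by omega))
    (fun t => if t.val % 2 = 0 then inl (r (t.val / 2)) else inr (c (t.val / 2))) fun u v => ?_
  rw [cycleGraph_adj_iff_val (by omega)]
  have := u.val_lt
  have := v.val_lt
  split_ifs
  · simp only [graphOf_not_adj_inl_inl, iff_false]; omega
  · rw [graphOf_adj_inl_inr, hrc _ (by omega) _ (by omega)]; omega
  · rw [graphOf_adj_inr_inl, hrc _ (by omega) _ (by omega)]; omega
  · simp only [graphOf_not_adj_inr_inr, iff_false]; omega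

section Cliques

variable {S D E Q : Finset (Fin m × Fin n)}

lemma IsCliqueIn.mk_mem (hD : IsCliqueIn S D) {a a' : Fin m} {b b' : Fin n}
    (h : (a, b) ∈ D) (h' : (a', b') ∈ D) : (a, b') ∈ D := by
  obtain ⟨-, -, R, C, rfl⟩ := hD
  rw [Finset.mem_product] at *
  exact ⟨h.1, h'.2⟩

lemma IsCliqueIn.exists_isMaxCliqueIn (hD : IsCliqueIn S D) :
    ∃ G, D ⊆ G ∧ IsMaxCliqueIn S G := by
  obtain ⟨G, hDG, hG⟩ := Finite.exists_le_maximal (p := IsCliqueIn S) hD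
  exact ⟨G, hDG, hG.1, fun E hE hGE => le_antisymm hGE (hG.2 hE hGE)⟩

lemma IsMaxCliqueIn.fst_mem {R : Finset (Fin m)} {C : Finset (Fin n)}
    (hD : IsMaxCliqueIn S (R ×ˢ C)) {x : Fin m} (hx : ∀ y ∈ C, (x, y) ∈ S) : x ∈ R := by
  obtain ⟨⟨_, y⟩, hy⟩ := hD.1.1
  have hyC := (Finset.mem_product.1 hy).2
  have hsub : insert x R ×ˢ C ⊆ S := by
    rintro ⟨a, b⟩ hab
    obtain ⟨rfl | ha, hb⟩ := by simpa using hab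
    · exact hx b hb
    · exact hD.1.2.1 (Finset.mem_product.2 ⟨ha, hb⟩)
  have hR : insert x R ×ˢ C = R ×ˢ C :=
    (hD.2 _ ⟨⟨(x, y), by simp [hyC]⟩, hsub, _, _, rfl⟩
      (Finset.product_subset_product_left (Finset.subset_insert x R))).symm
  have hxy : (x, y) ∈ R ×ˢ C := hR ▸ by simp [hyC]
  exact (Finset.mem_product.1 hxy).1

lemma IsMaxCliqueIn.snd_mem {R : Finset (Fin m)} {C : Finset (Fin n)}
    (hD : IsMaxCliqueIn S (R ×ˢ C)) {y : Fin n} (hy : ∀ x ∈ R, (x, y) ∈ S) : y ∈ C := by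
  obtain ⟨⟨x, _⟩, hx⟩ := hD.1.1
  have hxR := (Finset.mem_product.1 hx).1
  have hsub : R ×ˢ insert y C ⊆ S := by
    rintro ⟨a, b⟩ hab
    obtain ⟨ha, rfl | hb⟩ := by simpa using hab
    · exact hy a ha
    · exact hD.1.2.1 (Finset.mem_product.2 ⟨ha, hb⟩)
  have hC : R ×ˢ insert y C = R ×ˢ C :=
    (hD.2 _ ⟨⟨(x, y), by simp [hxR]⟩, hsub, _, _, rfl⟩
      (Finset.product_subset_product_right (Finset.subset_insert y C))).symm
  have hxy : (x, y) ∈ R ×ˢ C := hC ▸ by simp [hxR]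
  exact (Finset.mem_product.1 hxy).2

/-- If neither edge is in `D`, a row of `D` missing `j₁` and a column of `D` missing `i₂`
complete the path `i₁ j₁ i₂ j` to an induced double square. -/
lemma IsMaxCliqueIn.mem_or_mem_of_path (hS : ¬ HasInducedCopy doubleSquare (graphOf S))
    (hD : IsMaxCliqueIn S D) {i₁ i₂ : Fin m} {j j₁ : Fin n} (h : (i₁, j) ∈ D)
    (e₁ : (i₁, j₁) ∈ S) (e₂ : (i₂, j₁) ∈ S) (e₃ : (i₂, j) ∈ S) :
    (i₁, j₁) ∈ D ∨ (i₂, j) ∈ D := by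
  obtain ⟨R, C, rfl⟩ := hD.1.2.2
  have hDS : ∀ x ∈ R, ∀ y ∈ C, (x, y) ∈ S := fun x hx y hy =>
    hD.1.2.1 (Finset.mem_product.2 ⟨hx, hy⟩)
  obtain ⟨hi₁, hj⟩ := Finset.mem_product.1 h
  by_contra! hne
  simp only [Finset.mem_product, hi₁, hj, true_and, and_true] at hne
  obtain ⟨i₀, hi₀, n₀⟩ : ∃ x ∈ R, (x, j₁) ∉ S := by
    by_contra! hall; exact hne.1 (hD.snd_mem hall)
  obtain ⟨j₀, hj₀, n₂⟩ : ∃ y ∈ C, (i₂, y) ∉ S := by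
    by_contra! hall; exact hne.2 (hD.fst_mem hall)
  exact hS (hasInducedCopy_doubleSquare_graphOf (hDS i₀ hi₀ j₀ hj₀) (hDS i₀ hi₀ j hj)
    (hDS i₁ hi₁ j₀ hj₀) (hDS i₁ hi₁ j hj) e₁ e₃ e₂ n₀ n₂)

lemma IsPairIntersection.subset {C : Finset (Fin m × Fin n)} (hC : IsPairIntersection S C) :
    C ⊆ S := by
  obtain ⟨D, E, hD, -, -, rfl, -⟩ := hC
  exact Finset.inter_subset_left.trans hD.1.2.1

lemma IsMaxIntersection.inter_subset_of_isCliqueIn {C : Finset (Fin m × Fin n)}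
    (hC : IsMaxIntersection S C)
    (hD : IsMaxCliqueIn S D) (hQ : IsCliqueIn S Q) (hQD : ¬ Q ⊆ D) (hCQ : C ⊆ D ∩ Q) :
    D ∩ Q ⊆ C := by
  obtain ⟨-, -, -, -, -, -, hCne⟩ := hC.1
  obtain ⟨G, hQG, hG⟩ := hQ.exists_isMaxCliqueIn
  have hCG : C ⊆ D ∩ G := hCQ.trans (Finset.inter_subset_inter_left hQG)
  have hDG : D ≠ G := by rintro rfl; exact hQD hQG
  rw [hC.2 _ ⟨D, G, hD, hG, hDG, rfl, hCne.mono hCG⟩ hCG]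
  exact Finset.inter_subset_inter_left hQG

/-- By `IsMaxCliqueIn.mem_or_mem_of_path`, `(i₁, j₁) ∈ D`; if it were not in `E`, the same lemma
would put `(i₂, j) ∈ E`, and then `(A ∪ {i₂}) × (B ∪ {j₁})` is a clique meeting `D` in more than
`A × B`, against the maximality of `A × B` in `Int(S)`. -/
lemma IsMaxIntersection.mem_of_path_of_not_mem {A : Finset (Fin m)} {B : Finset (Fin n)}
    (hS : ¬ HasInducedCopy doubleSquare (graphOf S)) (hC : IsMaxIntersection S (A ×ˢ B))
    (hD : IsMaxCliqueIn S D) (hE : IsMaxCliqueIn S E) (hDE : A ×ˢ B = D ∩ E)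
    {i₁ i₂ : Fin m} {j j₁ : Fin n} (hi₁ : i₁ ∈ A) (hj : j ∈ B)
    (e₁ : (i₁, j₁) ∈ S) (e₂ : (i₂, j₁) ∈ S) (e₃ : (i₂, j) ∈ S) (h₂ : (i₂, j) ∉ D) : j₁ ∈ B := by
  have hCD : A ×ˢ B ⊆ D := hDE ▸ Finset.inter_subset_left
  have hCE : A ×ˢ B ⊆ E := hDE ▸ Finset.inter_subset_right
  have hi₁j : (i₁, j) ∈ A ×ˢ B := Finset.mem_product.2 ⟨hi₁, hj⟩
  have h₁D : (i₁, j₁) ∈ D := (hD.mem_or_mem_of_path hS (hCD hi₁j) e₁ e₂ e₃).resolve_right h₂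
  by_contra hj₁
  have h₁E : (i₁, j₁) ∉ E := fun h =>
    hj₁ (Finset.mem_product.1 (hDE ▸ Finset.mem_inter.2 ⟨h₁D, h⟩)).2
  have h₂E : (i₂, j) ∈ E := (hE.mem_or_mem_of_path hS (hCE hi₁j) e₁ e₂ e₃).resolve_left h₁E
  have hQ : IsCliqueIn S (insert i₂ A ×ˢ insert j₁ B) := by
    refine ⟨⟨(i₂, j₁), by simp⟩, ?_, _, _, rfl⟩
    rintro ⟨x, y⟩ hxy
    obtain ⟨rfl | hx, rfl | hy⟩ := by simpa using hxy
    · exact e₂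
    · exact hE.1.2.1 (hE.1.mk_mem h₂E (hCE (Finset.mem_product.2 ⟨hi₁, hy⟩)))
    · exact hD.1.2.1 (hD.1.mk_mem (hCD (Finset.mem_product.2 ⟨hx, hj⟩)) h₁D)
    · exact hC.1.subset (Finset.mem_product.2 ⟨hx, hy⟩)
  have hsub := hC.inter_subset_of_isCliqueIn hD hQ (fun h => h₂ (h (by simp [hj])))
    fun p hp => Finset.mem_inter.2 ⟨hCD hp, Finset.product_subset_product
      (Finset.subset_insert _ _) (Finset.subset_insert _ _) hp⟩
  exact hj₁ (Finset.mem_product.1 (hsub (Finset.mem_inter.2 ⟨h₁D, by simp [hi₁]⟩))).2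

lemma IsMaxIntersection.mem_or_mem_of_path {A : Finset (Fin m)} {B : Finset (Fin n)}
    (hS : ¬ HasInducedCopy doubleSquare (graphOf S)) (hC : IsMaxIntersection S (A ×ˢ B))
    {i₁ i₂ : Fin m} {j j₁ : Fin n} (hi₁ : i₁ ∈ A) (hj : j ∈ B)
    (e₁ : (i₁, j₁) ∈ S) (e₂ : (i₂, j₁) ∈ S) (e₃ : (i₂, j) ∈ S) : j₁ ∈ B ∨ i₂ ∈ A := by
  obtain ⟨D, E, hD, hE, -, hDE, -⟩ := hC.1
  by_cases hi₂ : i₂ ∈ A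
  · exact Or.inr hi₂
  have h₂ : (i₂, j) ∉ D ∨ (i₂, j) ∉ E := by
    rw [← not_and_or, ← Finset.mem_inter, ← hDE, Finset.mem_product]
    exact fun h => hi₂ h.1
  rcases h₂ with h₂ | h₂
  · exact Or.inl (hC.mem_of_path_of_not_mem hS hD hE hDE hi₁ hj e₁ e₂ e₃ h₂)
  · exact Or.inl (hC.mem_of_path_of_not_mem hS hE hD (hDE.trans (Finset.inter_comm _ _))
      hi₁ hj e₁ e₂ e₃ h₂)

end Cliques

structure IsLayerSequence (S : Finset (Fin m × Fin n)) (A : ℕ → Finset (Fin m))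
    (B : ℕ → Finset (Fin n)) : Prop where
  A_eq : ∀ k, 2 ≤ k →
    A k = Finset.univ.filter fun i => i ∉ A (k - 1) ∧ ∃ j ∈ B (k - 1), (i, j) ∈ S
  B_eq : ∀ k, 1 ≤ k →
    B k = Finset.univ.filter fun j => j ∉ B (k - 1) ∧ ∃ i ∈ A k, (i, j) ∈ S

namespace IsLayerSequence

variable {S : Finset (Fin m × Fin n)} {A : ℕ → Finset (Fin m)} {B : ℕ → Finset (Fin n)}
  {i : Fin m} {j : Fin n} {k l K : ℕ}

lemma mem_A_iff (hL : IsLayerSequence S A B) (hk : 2 ≤ k) :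
    i ∈ A k ↔ i ∉ A (k - 1) ∧ ∃ j ∈ B (k - 1), (i, j) ∈ S := by
  simp [hL.A_eq k hk]

lemma mem_B_iff (hL : IsLayerSequence S A B) (hk : 1 ≤ k) :
    j ∈ B k ↔ j ∉ B (k - 1) ∧ ∃ i ∈ A k, (i, j) ∈ S := by
  simp [hL.B_eq k hk]

lemma mem_B_of_mem_A (hL : IsLayerSequence S A B) (hk : 1 ≤ k) (hi : i ∈ A k)
    (hij : (i, j) ∈ S) : j ∈ B (k - 1) ∨ j ∈ B k := by
  rw [hL.mem_B_iff hk]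
  tauto

lemma mem_A_of_mem_B (hL : IsLayerSequence S A B) (hk : 1 ≤ k) (hj : j ∈ B k)
    (hij : (i, j) ∈ S) : i ∈ A k ∨ i ∈ A (k + 1) := by
  rw [hL.mem_A_iff (k := k + 1) (by omega), Nat.add_sub_cancel]
  tauto

lemma disjoint_A (hL : IsLayerSequence S A B)
    (hB : ∀ k k', k < k' → k' < l → Disjoint (B k) (B k')) (hk : 1 ≤ k) (hkl : k < l) :
    Disjoint (A k) (A l) := by
  rw [Finset.disjoint_left]
  intro i hik hil
  obtain ⟨hil', j, hj, hij⟩ := (hL.mem_A_iff (by omega)).1 hil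
  obtain rfl | hkl' := (Nat.le_sub_one_of_lt hkl).eq_or_lt
  · exact hil' hik
  rcases hL.mem_B_of_mem_A hk hik hij with hj' | hj'
  · exact Finset.disjoint_left.1 (hB _ _ (by omega) (by omega)) hj' hj
  · exact Finset.disjoint_left.1 (hB _ _ hkl' (by omega)) hj' hj

lemma disjoint_B_of_pos (hL : IsLayerSequence S A B)
    (hA : ∀ k k', 1 ≤ k → k < k' → k' ≤ l → Disjoint (A k) (A k')) (hk : 1 ≤ k) (hkl : k < l) :
    Disjoint (B k) (B l) := by
  rw [Finset.disjoint_left]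
  intro j hjk hjl
  obtain ⟨hjl', i, hi, hij⟩ := (hL.mem_B_iff (by omega)).1 hjl
  obtain rfl | hkl' := (Nat.le_sub_one_of_lt hkl).eq_or_lt
  · exact hjl' hjk
  rcases hL.mem_A_of_mem_B hk hjk hij with hi' | hi'
  · exact Finset.disjoint_left.1 (hA _ _ hk hkl le_rfl) hi' hi
  · exact Finset.disjoint_left.1 (hA _ _ (by omega) (by omega) le_rfl) hi' hi

lemma exists_path (hL : IsLayerSequence S A B) (hl : 1 ≤ l) (hj : j ∈ B l) :
    ∃ (r : ℕ → Fin m) (c : ℕ → Fin n), c l = j ∧ ∀ s, 1 ≤ s → s ≤ l →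
      r s ∈ A s ∧ c s ∈ B s ∧ (r s, c s) ∈ S ∧ (s < l → (r (s + 1), c s) ∈ S) := by
  induction l, hl using Nat.le_induction generalizing j with
  | base =>
    obtain ⟨-, i, hi, hij⟩ := (hL.mem_B_iff le_rfl).1 hj
    refine ⟨fun _ => i, fun _ => j, rfl, fun s hs₁ hs₂ => ?_⟩
    obtain rfl : s = 1 := by omega
    exact ⟨hi, hj, hij, by omega⟩
  | succ l hl ih =>
    obtain ⟨-, i, hi, hij⟩ := (hL.mem_B_iff (by omega)).1 hj
    obtain ⟨-, j', hj', hij'⟩ := (hL.mem_A_iff (by omega)).1 hi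
    obtain ⟨r, c, hcl, hrc⟩ := ih (by simpa using hj')
    refine ⟨fun s => if s = l + 1 then i else r s, fun s => if s = l + 1 then j else c s,
      by simp, fun s hs₁ hs₂ => ?_⟩
    obtain rfl | hs := hs₂.eq_or_lt
    · simpa using ⟨hi, hj, hij⟩
    obtain ⟨h₁, h₂, h₃, h₄⟩ := hrc s hs₁ (by omega)
    simp only [show s ≠ l + 1 by omega, if_false]
    refine ⟨h₁, h₂, h₃, fun _ => ?_⟩
    obtain rfl | hsl := (Nat.le_of_lt_succ hs).eq_or_lt
    · simpa [hcl] using hij'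
    · simpa [show s ≠ l by omega] using h₄ hsl

/-- The path from `j ∈ B l` back through the layers closes up through `A 1 × B 0 ⊆ S` to a cycle
of length `2l` in `G_S`, which the disjointness hypotheses make induced. -/
lemma disjoint_B_zero_of_three_le (hL : IsLayerSequence S A B)
    (hS : ∀ ℓ : ℕ, 6 ≤ ℓ → ¬ HasInducedCopy (cycleGraph ℓ) (graphOf S))
    (hC : A 1 ×ˢ B 0 ⊆ S) (hB₀ : ∀ k, 1 ≤ k → k < l → Disjoint (B 0) (B k))
    (hB : ∀ k k', 1 ≤ k → k < k' → k' ≤ l → Disjoint (B k) (B k')) (hl : 3 ≤ l) :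
    Disjoint (B 0) (B l) := by
  rw [Finset.disjoint_left]
  intro j hj₀ hjl
  obtain ⟨r, c, hcl, hrc⟩ := hL.exists_path (by omega) hjl
  have hindex : ∀ x k k', x ∈ B k → x ∈ B k' → 1 ≤ k → 1 ≤ k' → k ≤ l → k' ≤ l → k = k' := by
    intro x k k' hk hk' h₁ h₁' h₂ h₂'
    by_contra hne
    rcases Nat.lt_or_gt_of_ne hne with h | h
    · exact Finset.disjoint_left.1 (hB k k' h₁ h h₂') hk hk'
    · exact Finset.disjoint_left.1 (hB k' k h₁' h h₂) hk' hk
  refine hS (2 * l) (by omega) (hasInducedCopy_cycleGraph_graphOf hl (fun a => r (a + 1))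
    (fun b => c (b + 1)) fun a ha b hb => ⟨fun hab => ?_, ?_⟩)
  · have hcb := (hrc (b + 1) (by omega) (by omega)).2.1
    rcases hL.mem_B_of_mem_A (by omega) (hrc (a + 1) (by omega) (by omega)).1 hab with h | h
    · rw [Nat.add_sub_cancel] at h
      obtain rfl | ha₀ := Nat.eq_zero_or_pos a
      · obtain hbl | hbl := Nat.lt_or_ge (b + 1) l
        · exact (Finset.disjoint_left.1 (hB₀ _ (by omega) hbl) h hcb).elim
        · omega
      · have := hindex _ _ _ h hcb ha₀ (by omega) (by omega) (by omega)
        omega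
    · have := hindex _ _ _ h hcb (by omega) (by omega) (by omega) (by omega)
      omega
  · rintro (h | h | ⟨h, hb⟩)
    · rw [h]
      exact (hrc (a + 1) (by omega) (by omega)).2.2.1
    · rw [h]
      exact (hrc (b + 1) (by omega) (by omega)).2.2.2 (by omega)
    · rw [h, zero_add, hb, hcl]
      exact hC (Finset.mem_product.2 ⟨(hrc 1 le_rfl (by omega)).1, hj₀⟩)

lemma disjoint_B_zero (hL : IsLayerSequence S A B) (hS : DoublyChordalBipartite (graphOf S))
    (hC : IsMaxIntersection S (A 1 ×ˢ B 0)) (hB₀ : ∀ k, 1 ≤ k → k < l → Disjoint (B 0) (B k))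
    (hB : ∀ k k', 1 ≤ k → k < k' → k' ≤ l → Disjoint (B k) (B k')) (hl : 1 ≤ l) :
    Disjoint (B 0) (B l) := by
  obtain rfl | rfl | hl := show l = 1 ∨ l = 2 ∨ 3 ≤ l by omega
  · rw [Finset.disjoint_left]
    exact fun j hj₀ hj₁ => ((hL.mem_B_iff le_rfl).1 hj₁).1 hj₀
  · rw [Finset.disjoint_left]
    intro j hj₀ hj₂
    obtain ⟨-, i₂, hi₂, e₃⟩ := (hL.mem_B_iff (by omega)).1 hj₂
    obtain ⟨hi₂₁, j₁, hj₁, e₂⟩ := (hL.mem_A_iff le_rfl).1 hi₂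
    obtain ⟨hj₁₀, i₁, hi₁, e₁⟩ := (hL.mem_B_iff le_rfl).1 hj₁
    exact (hC.mem_or_mem_of_path hS.2 hi₁ hj₀ e₁ e₂ e₃).elim hj₁₀ hi₂₁
  · exact hL.disjoint_B_zero_of_three_le hS.1 hC.1.subset hB₀ hB hl

lemma disjoint_of_le (hL : IsLayerSequence S A B) (hS : DoublyChordalBipartite (graphOf S))
    (hC : IsMaxIntersection S (A 1 ×ˢ B 0)) (l : ℕ) :
    (∀ k k', 1 ≤ k → k < k' → k' ≤ l → Disjoint (A k) (A k')) ∧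
      ∀ k k', k < k' → k' ≤ l → Disjoint (B k) (B k') := by
  induction l with
  | zero => exact ⟨fun _ _ _ _ _ => by omega, fun _ _ _ _ => by omega⟩
  | succ l ih =>
    have hA : ∀ k k', 1 ≤ k → k < k' → k' ≤ l + 1 → Disjoint (A k) (A k') := by
      intro k k' hk hkk' hk'
      obtain hk' | rfl := hk'.lt_or_eq
      · exact ih.1 k k' hk hkk' (by omega)
      · exact hL.disjoint_A (fun a b hab hb => ih.2 a b hab (by omega)) hk hkk'
    have hB : ∀ k k', 1 ≤ k → k < k' → k' ≤ l + 1 → Disjoint (B k) (B k') :=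
      fun k k' hk hkk' hk' =>
        hL.disjoint_B_of_pos (fun a b ha hab hb => hA a b ha hab (by omega)) hk hkk'
    refine ⟨hA, fun k k' hkk' hk' => ?_⟩
    obtain rfl | hk := Nat.eq_zero_or_pos k
    · exact hL.disjoint_B_zero hS hC (fun a ha hak' => ih.2 0 a (by omega) (by omega))
        (fun a b ha hab hb => hB a b ha hab (by omega)) hkk'
    · exact hB k k' hk hkk' hk'

lemma pairwiseDisjoint_A (hL : IsLayerSequence S A B) (hS : DoublyChordalBipartite (graphOf S))
    (hC : IsMaxIntersection S (A 1 ×ˢ B 0)) : (Set.Ici 1).PairwiseDisjoint A := by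
  intro k hk k' hk' hne
  rcases Nat.lt_or_gt_of_ne hne with h | h
  · exact (hL.disjoint_of_le hS hC k').1 k k' hk h le_rfl
  · exact ((hL.disjoint_of_le hS hC k).1 k' k hk' h le_rfl).symm

lemma pairwiseDisjoint_B (hL : IsLayerSequence S A B) (hS : DoublyChordalBipartite (graphOf S))
    (hC : IsMaxIntersection S (A 1 ×ˢ B 0)) : Set.univ.PairwiseDisjoint B := by
  intro k _ k' _ hne
  rcases Nat.lt_or_gt_of_ne hne with h | h
  · exact (hL.disjoint_of_le hS hC k').2 k k' h le_rfl
  · exact ((hL.disjoint_of_le hS hC k).2 k' k h le_rfl).symm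

lemma eventually_eq_empty (hL : IsLayerSequence S A B) (hK₁ : 1 ≤ K) (hK : A K = ∅) :
    ∀ k, K ≤ k → A k = ∅ ∧ B k = ∅ := by
  have hB : ∀ k, 1 ≤ k → A k = ∅ → B k = ∅ := fun k hk hA =>
    Finset.eq_empty_of_forall_notMem fun j hj => by simp [hL.mem_B_iff hk, hA] at hj
  intro k hk
  induction k, hk using Nat.le_induction with
  | base => exact ⟨hK, hB K hK₁ hK⟩
  | succ k hk ih =>
    have hA : A (k + 1) = ∅ := Finset.eq_empty_of_forall_notMem fun i hi => by
      simp [hL.mem_A_iff (k := k + 1) (by omega), ih.2] at hi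
    exact ⟨hA, hB (k + 1) (by omega) hA⟩

lemma exists_eventually_eq_empty (hL : IsLayerSequence S A B)
    (hS : DoublyChordalBipartite (graphOf S)) (hC : IsMaxIntersection S (A 1 ×ˢ B 0)) :
    ∃ K, ∀ k, K ≤ k → A k = ∅ ∧ B k = ∅ := by
  obtain ⟨K, hK₁, hK⟩ := Finset.exists_eq_empty_of_pairwiseDisjoint (hL.pairwiseDisjoint_A hS hC)
  exact ⟨K, hL.eventually_eq_empty hK₁ hK⟩

/-- Each sum counts at most one layer, and `i` lies in some layer `A k` exactly when `j` lies in
some layer `B k` with `k ≥ 1` or `(i, j) ∈ A 1 × B 0`. -/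
lemma sum_ite_sub_ite (hL : IsLayerSequence S A B) (hS : DoublyChordalBipartite (graphOf S))
    (hC : IsMaxIntersection S (A 1 ×ˢ B 0)) (hK : ∀ k, K ≤ k → A k = ∅ ∧ B k = ∅)
    (hij : (i, j) ∈ S) :
    ∑ k ∈ Finset.Ico 1 K, ((if i ∈ A k then 1 else 0) - (if j ∈ B k then 1 else 0) : ℝ) =
      if i ∈ A 1 ∧ j ∈ B 0 then 1 else 0 := by
  have hdA := hL.pairwiseDisjoint_A hS hC
  have hdB := hL.pairwiseDisjoint_B hS hC
  have hA_lt : ∀ {k}, i ∈ A k → k < K := fun {k} h => by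
    by_contra! hk; simp [(hK k hk).1] at h
  have hB_lt : ∀ {k}, j ∈ B k → k < K := fun {k} h => by
    by_contra! hk; simp [(hK k hk).2] at h
  have hexcl : ¬ ((i ∈ A 1 ∧ j ∈ B 0) ∧ ∃ k ∈ Finset.Ico 1 K, j ∈ B k) :=
    fun ⟨⟨_, h₀⟩, k, hk, hk'⟩ => Finset.disjoint_left.1 (hdB (Set.mem_univ 0) (Set.mem_univ k)
      (by rw [Finset.mem_Ico] at hk; omega)) h₀ hk'
  have hiff : (∃ k ∈ Finset.Ico 1 K, i ∈ A k) ↔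
      (i ∈ A 1 ∧ j ∈ B 0) ∨ ∃ k ∈ Finset.Ico 1 K, j ∈ B k := by
    simp only [Finset.mem_Ico]
    constructor
    · rintro ⟨α, ⟨hα, -⟩, hi⟩
      rcases hL.mem_B_of_mem_A hα hi hij with hj | hj
      · obtain rfl | hα := hα.eq_or_lt
        · exact Or.inl ⟨hi, hj⟩
        · exact Or.inr ⟨α - 1, ⟨by omega, hB_lt hj⟩, hj⟩
      · exact Or.inr ⟨α, ⟨hα, hB_lt hj⟩, hj⟩
    · rintro (⟨hi, -⟩ | ⟨k, ⟨hk, -⟩, hj⟩)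
      · exact ⟨1, ⟨le_rfl, hA_lt hi⟩, hi⟩
      · rcases hL.mem_A_of_mem_B hk hj hij with hi | hi
        · exact ⟨k, ⟨hk, hA_lt hi⟩, hi⟩
        · exact ⟨k + 1, ⟨by omega, hA_lt hi⟩, hi⟩
  rw [Finset.sum_sub_distrib,
    Finset.sum_ite_mem_of_pairwiseDisjoint (hdA.subset fun k hk => (Finset.mem_Ico.1 hk).1),
    Finset.sum_ite_mem_of_pairwiseDisjoint (hdB.subset (Set.subset_univ _))]
  exact ite_sub_ite_eq_ite hiff hexcl

end IsLayerSequence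

/-- Let `G_S` be doubly chordal bipartite and `C = A 1 ×ˢ B 0 ∈ Int(S)`, with
the sets `A k` (for `k ≥ 2`) and `B k` (for `k ≥ 1`) defined by the recursions of the paper.
Then `A k` and `B k` are empty for all sufficiently large `k`, and the indicator vector of `C`
satisfies `𝟙_C = Σ_{k ≥ 1} (Σ_{i ∈ A k} a_i − Σ_{j ∈ B k} b_j)` in `ℝ^S`, where `a_i` and `b_j`
are the rows of the matrix `A_S`. -/
theorem stmt13 {m n : ℕ} (S : Finset (Fin m × Fin n))
    (hG : DoublyChordalBipartite (graphOf S))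
    (A : ℕ → Finset (Fin m)) (B : ℕ → Finset (Fin n))
    (hC : IsMaxIntersection S (A 1 ×ˢ B 0))
    (hA : ∀ k, 2 ≤ k →
      A k = Finset.univ.filter fun i => i ∉ A (k - 1) ∧ ∃ j ∈ B (k - 1), (i, j) ∈ S)
    (hB : ∀ k, 1 ≤ k →
      B k = Finset.univ.filter fun j => j ∉ B (k - 1) ∧ ∃ i ∈ A k, (i, j) ∈ S) :
    (∃ K, ∀ k, K ≤ k → A k = ∅ ∧ B k = ∅) ∧
    (fun p : Fin m × Fin n => if p ∈ A 1 ×ˢ B 0 then (1 : ℝ) else 0) =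
      ∑ᶠ k ∈ Set.Ici 1,
        ((∑ i ∈ A k, fun p : Fin m × Fin n => if p ∈ S ∧ p.1 = i then (1 : ℝ) else 0) -
         (∑ j ∈ B k, fun p : Fin m × Fin n => if p ∈ S ∧ p.2 = j then (1 : ℝ) else 0)) := by
  have hL : IsLayerSequence S A B := ⟨hA, hB⟩
  obtain ⟨K, hK⟩ := hL.exists_eventually_eq_empty hG hC
  refine ⟨⟨K, hK⟩, ?_⟩
  rw [finsum_mem_eq_sum_of_subset _ (t := Finset.Ico 1 K) ?_ ?_]
  · ext ⟨i, j⟩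
    by_cases hij : (i, j) ∈ S
    · simpa [Finset.sum_apply, hij] using (hL.sum_ite_sub_ite hG hC hK hij).symm
    · simpa [Finset.sum_apply, hij] using
        fun hi hj => hij (hC.1.subset (Finset.mem_product.2 ⟨hi, hj⟩))
  · rintro k ⟨hk, hsupp⟩
    by_contra hkK
    obtain ⟨hAk, hBk⟩ := hK k (not_lt.1 fun h => hkK (Finset.mem_Ico.2 ⟨hk, h⟩))
    simp [hAk, hBk] at hsupp
  · exact fun k hk => (Finset.mem_Ico.1 hk).1
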